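/- Let R be a commutative Noetherian ring, Φ a system of ideals of R, M an arbitrary R-module, and t a non-negative integer. Then H^i_Φ(M) = 0 for all i < t if and only if H^i_𝔞(M) = 0 for all i < t and all 𝔞 ∈ Φ. -/

import Mathlib

open CategoryTheory CategoryTheory.Limits Opposite

noncomputable section

section Preliminaries

variable {R : Type} [CommRing R]

/-- A *system of ideals* of `R`: a nonempty set of ideals `Φ` such that for all
`a, b ∈ Φ` there is `c ∈ Φ` with `c ⊆ a * b`. -/
def Ideal.IsSystem (Φ : Set (Ideal R)) : Prop :=
  Φ.Nonempty ∧ ∀ a ∈ Φ, ∀ b ∈ Φ, ∃ c ∈ Φ, c ≤ a * b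

/-- The `Φ`-torsion submodule `Γ_Φ(M)`; for a system of ideals `Φ` it is
`{x ∈ M | a • x = 0 for some a ∈ Φ}`. -/
def phiTorsion (Φ : Set (Ideal R)) (M : ModuleCat.{0} R) : Submodule R M :=
  ⨆ a ∈ Φ, Submodule.torsionBySet R M (a : Set R)

lemma phiTorsion_le_comap (Φ : Set (Ideal R)) {M N : ModuleCat.{0} R} (f : M ⟶ N) :
    phiTorsion Φ M ≤ (phiTorsion Φ N).comap f.hom := by
  refine iSup₂_le fun a ha => le_trans ?_ (Submodule.comap_mono
    (le_iSup₂ (f := fun (a : Ideal R) (_ : a ∈ Φ) => Submodule.torsionBySet R N (a : Set R)) a ha))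
  intro x hx
  rw [Submodule.mem_torsionBySet_iff] at hx
  rw [Submodule.mem_comap, Submodule.mem_torsionBySet_iff]
  intro r
  have h : f.hom ((r : R) • x) = (r : R) • f.hom x := map_smul f.hom (r : R) x
  rw [hx r, map_zero] at h
  exact h.symm

/-- The `Φ`-torsion functor `Γ_Φ(-)`. -/
def phiTorsionFunctor (Φ : Set (Ideal R)) : ModuleCat.{0} R ⥤ ModuleCat.{0} R where
  obj M := ModuleCat.of R (phiTorsion Φ M)
  map {M N} f := ModuleCat.ofHom (LinearMap.restrict f.hom (fun x hx => phiTorsion_le_comap Φ f hx))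
  map_id M := by ext x; rfl
  map_comp f g := by ext x; rfl

instance (Φ : Set (Ideal R)) : (phiTorsionFunctor Φ).Additive where
  map_add := by intros; ext x; rfl

/-- General local cohomology `H^i_Φ(-)`: the `i`-th right derived functor of `Γ_Φ(-)`. -/
def glc (Φ : Set (Ideal R)) (i : ℕ) : ModuleCat.{0} R ⥤ ModuleCat.{0} R :=
  (phiTorsionFunctor Φ).rightDerived i

/-- Ordinary local cohomology `H^i_a(-)`: the `i`-th right derived functor of the
`a`-torsion functor `Γ_a(-) = Γ_Φ(-)` where `Φ = {a^n : n ∈ ℕ}`. -/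
def olc (a : Ideal R) (i : ℕ) : ModuleCat.{0} R ⥤ ModuleCat.{0} R :=
  glc {I : Ideal R | ∃ n : ℕ, I = a ^ n} i

/-- `Ext^n_R(N, M)` as an `R`-module. -/
def extM (n : ℕ) (N M : ModuleCat.{0} R) : ModuleCat.{0} R :=
  ((Ext R (ModuleCat.{0} R) n).obj (op N)).obj M

/-- A Serre subcategory of the category of `R`-modules, given by the class of its
objects: for every short exact sequence `0 → X₁ → X₂ → X₃ → 0`, `X₂` belongs to
the class iff both `X₁` and `X₃` do. -/
structure SerreClass (R : Type) [CommRing R] : Type 1 where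
  mem : ModuleCat.{0} R → Prop
  shortExact_iff : ∀ {S : ShortComplex (ModuleCat.{0} R)}, S.ShortExact →
    (mem S.X₂ ↔ mem S.X₁ ∧ mem S.X₃)

/-- `X` is an `a`-torsion module: every element is annihilated by some power of `a`. -/
def IsIdealTorsion (a : Ideal R) (X : ModuleCat.{0} R) : Prop :=
  ∀ x : X, ∃ n : ℕ, ∀ r ∈ a ^ n, r • x = 0

/-- A Serre class is a *Melkersson subcategory* with respect to `a` if for every
`a`-torsion module `X`, `(0 :_X a) ∈ S` implies `X ∈ S`. -/
def SerreClass.IsMelkersson (S : SerreClass R) (a : Ideal R) : Prop :=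
  ∀ X : ModuleCat.{0} R, IsIdealTorsion a X →
    S.mem (ModuleCat.of R (Submodule.torsionBySet R X (a : Set R))) → S.mem X

/-- The dimension of a module: the Krull dimension of its support
(so it equals `⊥ = -1` exactly for the zero module). -/
def moduleDim (R : Type) [CommRing R] (M : Type) [AddCommGroup M] [Module R M] :
    WithBot ℕ∞ :=
  Order.krullDim (Module.support R M)

/-- Interpret an integer `k ≥ -1` as an element of `{-1, 0, 1, ...} ∪ {∞}`. -/
def intDim (k : ℤ) : WithBot ℕ∞ := if k < 0 then ⊥ else ((k.toNat : ℕ∞) : WithBot ℕ∞)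

end Preliminaries

/-! Both sides are computed on one injective resolution `I` of `M`. A `Γ_Φ`-torsion cocycle of
`I` is already `𝔞`-torsion for some `𝔞 ∈ Φ`, and every `𝔞ⁿ` contains a member of `Φ`, so
exactness of all `Γ_𝔞(I)` below `t` gives exactness of `Γ_Φ(I)` below `t`. Conversely, exactness
of `Γ_Φ(I)` below `t` and injectivity of the `Iⁿ` yield linear maps `s : Iⁿ → Iⁿ⁻¹` with
`d (s x) = x` for every `Γ_Φ`-torsion cocycle `x`. Every `𝔞ⁿ`-torsion cocycle is such an `x`,
and `s x` is again `𝔞ⁿ`-torsion because `s` is linear. -/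

universe u v w

section Extension

variable {R : Type u} [Ring R]

lemma exists_linearMap_comp_eq_of_ker_le {A : Type w} [AddCommGroup A] [Module R A]
    {B X : ModuleCat.{v} R} [Injective X] (D : A →ₗ[R] B) (φ : A →ₗ[R] X)
    (hker : LinearMap.ker D ≤ LinearMap.ker φ) : ∃ g : B →ₗ[R] X, g ∘ₗ D = φ := by
  let ψ : ModuleCat.of R (LinearMap.range D) ⟶ X :=
    ModuleCat.ofHom ((LinearMap.ker D).liftQ φ hker ∘ₗ D.quotKerEquivRange.symm.toLinearMap)
  let ι : ModuleCat.of R (LinearMap.range D) ⟶ B := ModuleCat.ofHom (LinearMap.range D).subtype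
  have : Mono ι := (ModuleCat.mono_iff_injective ι).2 Subtype.val_injective
  refine ⟨(Injective.factorThru ψ ι).hom, LinearMap.ext fun a => ?_⟩
  have hfac := LinearMap.congr_fun (congrArg ModuleCat.Hom.hom (Injective.comp_factorThru ψ ι))
    ⟨D a, LinearMap.mem_range_self D a⟩
  refine hfac.trans ?_
  change (LinearMap.ker D).liftQ φ hker (D.quotKerEquivRange.symm ⟨D a, _⟩) = φ a
  rw [LinearMap.quotKerEquivRange_symm_apply_image]
  rfl

end Extension

namespace CochainComplex

variable {R : Type u} [Ring R] (C : CochainComplex (ModuleCat.{v} R) ℕ)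

/-- Since `0 - 1 = 0` and `C.d 0 0 = 0`, in degree `0` this says that `K 0` contains no
nonzero cocycle. -/
def ExactWithin (K : ∀ n, Submodule R (C.X n)) (n : ℕ) : Prop :=
  ∀ x ∈ K n, C.d n (n + 1) x = 0 → ∃ y ∈ K (n - 1), C.d (n - 1) n y = x

variable {C} {K : ∀ n, Submodule R (C.X n)}

lemma exists_contraction_succ {n : ℕ} [Injective (C.X n)] (s : C.X n →ₗ[R] C.X (n - 1))
    (hs : ∀ x ∈ K n, C.d n (n + 1) x = 0 → C.d (n - 1) n (s x) = x)
    (hexact : C.ExactWithin K (n + 1)) :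
    ∃ s' : C.X (n + 1) →ₗ[R] C.X n,
      ∀ x ∈ K (n + 1), C.d (n + 1) (n + 2) x = 0 → C.d n (n + 1) (s' x) = x := by
  let D : K n →ₗ[R] C.X (n + 1) := (C.d n (n + 1)).hom ∘ₗ (K n).subtype
  -- `z ↦ z - d (s z)` kills the cocycles of `K n`, so it factors through `d` on `K n`
  let φ : K n →ₗ[R] C.X n := (K n).subtype - (C.d (n - 1) n).hom ∘ₗ s ∘ₗ (K n).subtype
  have hker : LinearMap.ker D ≤ LinearMap.ker φ := fun z hz => by
    change (z : C.X n) - C.d (n - 1) n (s z) = 0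
    rw [hs z z.2 hz, sub_self]
  obtain ⟨s', hs'⟩ := exists_linearMap_comp_eq_of_ker_le D φ hker
  refine ⟨s', fun x hx hdx => ?_⟩
  obtain ⟨y, hy, rfl⟩ : ∃ y ∈ K n, C.d n (n + 1) y = x := hexact x hx hdx
  have hφ : s' (C.d n (n + 1) y) = y - C.d (n - 1) n (s y) :=
    LinearMap.congr_fun hs' ⟨y, hy⟩
  have hdd : C.d n (n + 1) (C.d (n - 1) n (s y)) = 0 :=
    LinearMap.congr_fun (congrArg ModuleCat.Hom.hom (C.d_comp_d _ _ _)) (s y)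
  rw [hφ, map_sub, hdd, sub_zero]

lemma exists_contraction_of_exactWithin (hinj : ∀ n, Injective (C.X n)) {t : ℕ}
    (hexact : ∀ n < t, C.ExactWithin K n) :
    ∀ n < t, ∃ s : C.X n →ₗ[R] C.X (n - 1),
      ∀ x ∈ K n, C.d n (n + 1) x = 0 → C.d (n - 1) n (s x) = x := by
  intro n
  induction n with
  | zero =>
    intro ht
    refine ⟨0, fun x hx hdx => ?_⟩
    obtain ⟨y, -, rfl⟩ := hexact 0 ht x hx hdx
    have hd : C.d (0 - 1) 0 = 0 := C.shape _ _ (by simp)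
    rw [hd]
    rfl
  | succ n ih =>
    intro ht
    obtain ⟨s, hs⟩ := ih (Nat.lt_of_succ_lt ht)
    have := hinj n
    exact exists_contraction_succ s hs (hexact (n + 1) ht)

end CochainComplex

section Torsion

variable {R : Type} [CommRing R]

lemma Ideal.IsSystem.directedOn {Φ : Set (Ideal R)} (hΦ : Ideal.IsSystem Φ) :
    DirectedOn (· ≥ ·) Φ := fun a ha b hb => by
  obtain ⟨c, hc, hcab⟩ := hΦ.2 a ha b hb
  exact ⟨c, hc, hcab.trans Ideal.mul_le_left, hcab.trans Ideal.mul_le_right⟩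

lemma Ideal.IsSystem.exists_le_pow {Φ : Set (Ideal R)} (hΦ : Ideal.IsSystem Φ) {a : Ideal R}
    (ha : a ∈ Φ) (n : ℕ) : ∃ c ∈ Φ, c ≤ a ^ n := by
  induction n with
  | zero => exact ⟨a, ha, by simp⟩
  | succ n ih =>
    obtain ⟨c, hc, hca⟩ := ih
    obtain ⟨d, hd, hdac⟩ := hΦ.2 a ha c hc
    exact ⟨d, hd, hdac.trans (by rw [pow_succ']; exact Ideal.mul_mono_right hca)⟩

def Ideal.powerSystem (a : Ideal R) : Set (Ideal R) := {I : Ideal R | ∃ n : ℕ, I = a ^ n}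

lemma olc_eq_glc_powerSystem (a : Ideal R) (i : ℕ) : olc a i = glc a.powerSystem i := rfl

variable {Φ Ψ : Set (Ideal R)} {N : ModuleCat.{0} R}

lemma torsionBySet_le_phiTorsion {a : Ideal R} (ha : a ∈ Φ) :
    Submodule.torsionBySet R N (a : Set R) ≤ phiTorsion Φ N :=
  le_iSup₂ (f := fun (a : Ideal R) (_ : a ∈ Φ) => Submodule.torsionBySet R N (a : Set R)) a ha

lemma phiTorsion_mono (h : ∀ b ∈ Ψ, ∃ a ∈ Φ, a ≤ b) : phiTorsion Ψ N ≤ phiTorsion Φ N :=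
  iSup₂_le fun b hb => by
    obtain ⟨a, ha, hab⟩ := h b hb
    exact (Submodule.torsionBySet_le_torsionBySet_of_subset hab).trans
      (torsionBySet_le_phiTorsion ha)

lemma mem_phiTorsion_iff (hne : Φ.Nonempty) (hdir : DirectedOn (· ≥ ·) Φ) {x : N} :
    x ∈ phiTorsion Φ N ↔ ∃ a ∈ Φ, x ∈ Submodule.torsionBySet R N (a : Set R) := by
  have : Nonempty Φ := hne.to_subtype
  rw [phiTorsion, iSup_subtype', Submodule.mem_iSup_of_directed]
  · exact ⟨fun ⟨a, hx⟩ => ⟨a, a.2, hx⟩, fun ⟨a, ha, hx⟩ => ⟨⟨a, ha⟩, hx⟩⟩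
  · rintro ⟨a, ha⟩ ⟨b, hb⟩
    obtain ⟨c, hc, hca, hcb⟩ := hdir a ha b hb
    exact ⟨⟨c, hc⟩, Submodule.torsionBySet_le_torsionBySet_of_subset hca,
      Submodule.torsionBySet_le_torsionBySet_of_subset hcb⟩

lemma phiTorsion_powerSystem_le (hΦ : Ideal.IsSystem Φ) {a : Ideal R} (ha : a ∈ Φ) :
    phiTorsion a.powerSystem N ≤ phiTorsion Φ N :=
  phiTorsion_mono fun _ ⟨k, hk⟩ => hk ▸ hΦ.exists_le_pow ha k

end Torsion

section LocalCohomology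

variable {R : Type} [CommRing R] {Φ : Set (Ideal R)}

lemma exactAt_mapHomologicalComplex_phiTorsionFunctor_iff
    (C : CochainComplex (ModuleCat.{0} R) ℕ) (n : ℕ) :
    (((phiTorsionFunctor Φ).mapHomologicalComplex (ComplexShape.up ℕ)).obj C).ExactAt n ↔
      C.ExactWithin (fun k => phiTorsion Φ (C.X k)) n := by
  have hprev : (ComplexShape.up ℕ).prev n = n - 1 := by
    cases n with
    | zero => exact CochainComplex.prev_nat_zero
    | succ n => exact CochainComplex.prev_nat_succ n
  rw [HomologicalComplex.exactAt_iff' _ (n - 1) n (n + 1) hprev (CochainComplex.next ℕ n),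
    ShortComplex.moduleCat_exact_iff]
  constructor
  · intro h x hx hdx
    obtain ⟨y, hy⟩ := h ⟨x, hx⟩ (Subtype.ext hdx)
    exact ⟨y.1, y.2, congrArg Subtype.val hy⟩
  · intro h x hdx
    obtain ⟨y, hy, hdy⟩ := h x.1 x.2 (congrArg Subtype.val hdx)
    exact ⟨⟨y, hy⟩, Subtype.ext hdy⟩

lemma subsingleton_glc_iff {M : ModuleCat.{0} R} (I : InjectiveResolution M) (i : ℕ) :
    Subsingleton ((glc Φ i).obj M) ↔
      I.cocomplex.ExactWithin (fun k => phiTorsion Φ (I.cocomplex.X k)) i := by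
  rw [← exactAt_mapHomologicalComplex_phiTorsionFunctor_iff,
    HomologicalComplex.exactAt_iff_isZero_homology, ← ModuleCat.isZero_iff_subsingleton]
  exact (I.isoRightDerivedObj (phiTorsionFunctor Φ) i).isZero_iff

variable {C : CochainComplex (ModuleCat.{0} R) ℕ}

lemma exactWithin_phiTorsion_of_powerSystem (hΦ : Ideal.IsSystem Φ) {n : ℕ}
    (h : ∀ a ∈ Φ, C.ExactWithin (fun k => phiTorsion a.powerSystem (C.X k)) n) :
    C.ExactWithin (fun k => phiTorsion Φ (C.X k)) n := by
  intro x hx hdx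
  obtain ⟨a, ha, hxa⟩ := (mem_phiTorsion_iff hΦ.1 hΦ.directedOn).1 hx
  obtain ⟨y, hy, hdy⟩ := h a ha x (torsionBySet_le_phiTorsion
    (show a ∈ a.powerSystem from ⟨1, (pow_one a).symm⟩) hxa) hdx
  exact ⟨y, phiTorsion_powerSystem_le hΦ ha hy, hdy⟩

lemma exactWithin_powerSystem_of_phiTorsion (hΦ : Ideal.IsSystem Φ)
    (hinj : ∀ n, Injective (C.X n)) {t : ℕ}
    (h : ∀ n < t, C.ExactWithin (fun k => phiTorsion Φ (C.X k)) n) {a : Ideal R} (ha : a ∈ Φ) :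
    ∀ n < t, C.ExactWithin (fun k => phiTorsion a.powerSystem (C.X k)) n := by
  intro n hn x hx hdx
  obtain ⟨s, hs⟩ := C.exists_contraction_of_exactWithin hinj h n hn
  exact ⟨s x, phiTorsion_le_comap _ (ModuleCat.ofHom s) hx,
    hs x (phiTorsion_powerSystem_le hΦ ha hx) hdx⟩

end LocalCohomology

theorem stmt16_general (R : Type) [CommRing R]
    (Φ : Set (Ideal R)) (hΦ : Ideal.IsSystem Φ)
    (M : ModuleCat.{0} R) (t : ℕ) :
    (∀ i < t, Subsingleton ((glc Φ i).obj M)) ↔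
      (∀ a ∈ Φ, ∀ i < t, Subsingleton ((olc a i).obj M)) := by
  obtain ⟨I⟩ := HasInjectiveResolution.out (Z := M)
  simp only [olc_eq_glc_powerSystem, subsingleton_glc_iff I]
  exact ⟨fun h a ha => exactWithin_powerSystem_of_phiTorsion hΦ I.injective h ha,
    fun h i hi => exactWithin_phiTorsion_of_powerSystem hΦ fun a ha => h a ha i hi⟩

/-- **Corollary 3.8.** `H^i_Φ(M) = 0` for all `i < t` iff `H^i_a(M) = 0` for all `i < t`
and all `a ∈ Φ`. -/
theorem stmt16 (R : Type) [CommRing R] [IsNoetherianRing R]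
    (Φ : Set (Ideal R)) (hΦ : Ideal.IsSystem Φ)
    (M : ModuleCat.{0} R) (t : ℕ) :
    (∀ i < t, Subsingleton ((glc Φ i).obj M)) ↔
      (∀ a ∈ Φ, ∀ i < t, Subsingleton ((olc a i).obj M)) :=
  stmt16_general R Φ hΦ M t

end
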